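/- Let d ≥ 3, 2* = 2d/(d−2), and for c > 0 define u_c : ℝ^d → ℝ by u_c(x) = |x|^{c−(d−2)/2} for |x| ≤ 1 and u_c(x) = |x|^{−c−(d−2)/2} for |x| > 1. Then: (a) if 0 < c ≤ (d−2)/2, the weak Lorentz norm satisfies ‖u_c‖_{L^{2*,∞}(ℝ^d)} = |B(0,1)|^{1/2*}; (b) if c > (d−2)/2, then ‖u_c‖_{L^{2*,∞}(ℝ^d)} < |B(0,1)|^{1/2*}. -/

import Mathlib

open MeasureTheory

noncomputable section

/-- The weak Lorentz quasi-norm `‖u‖_{L^{q,∞}} = sup_{s>0} s |{|u|>s}|^{1/q}`. -/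
def weakNorm {d : ℕ} (q : ℝ) (u : EuclideanSpace ℝ (Fin d) → ℝ) : ℝ :=
  ⨆ s : Set.Ioi (0 : ℝ), (s : ℝ) * (volume {x | (s : ℝ) < |u x|}).toReal ^ (1 / q)

/-- The function `u_c(x) = |x|^{c−(d−2)/2}` for `|x| ≤ 1`, `|x|^{−c−(d−2)/2}` for `|x| > 1`. -/
def uc (d : ℕ) (c : ℝ) (x : EuclideanSpace ℝ (Fin d)) : ℝ :=
  if ‖x‖ ≤ 1 then ‖x‖ ^ (c - ((d : ℝ) - 2) / 2) else ‖x‖ ^ (-c - ((d : ℝ) - 2) / 2)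

/-!
Away from the origin `u_c(x) ≤ |x|^{-(d-2)/2}`, so the superlevel set `{u_c > s}` lies in the ball
of radius `s^{-2/(d-2)}`, of volume `|B(0,1)| s^{-2*}`; this bounds the weak norm by
`|B(0,1)|^{1/2*}` for every `c ≥ 0`. If `c ≤ (d-2)/2`, then `u_c ≥ 1` on the punctured unit ball,
and letting `s → 1⁻` gives equality. If `c > (d-2)/2`, then
`u_c(x) = min(|x|^{c-(d-2)/2}, |x|^{-c-(d-2)/2}) ≤ 1` and `{u_c > s}` lies in an annulus, giving
`s^{2*} |{u_c > s}| ≤ (s^a - s^b) |B(0,1)|` with `a, b > 0`; by compactness `s^a - s^b` stays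
uniformly below `1` on `[0, 1]`.
-/
open Metric Real Module Set Filter Topology

theorem MeasureTheory.Measure.addHaar_real_ball_of_pos {E : Type*} [NormedAddCommGroup E]
    [NormedSpace ℝ E] [MeasurableSpace E] [BorelSpace E] [FiniteDimensional ℝ E]
    (μ : Measure E) [μ.IsAddHaarMeasure] (x : E) {r : ℝ} (hr : 0 < r) :
    μ.real (ball x r) = r ^ finrank ℝ E * μ.real (ball 0 1) := by
  rw [measureReal_def, measureReal_def, μ.addHaar_ball_of_pos x hr, ENNReal.toReal_mul,
    ENNReal.toReal_ofReal (by positivity)]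

theorem mul_rpow_one_div_le_of_rpow_mul_le {s q X B : ℝ} (hs : 0 ≤ s) (hq : 0 < q) (hX : 0 ≤ X)
    (h : s ^ q * X ≤ B) : s * X ^ (1 / q) ≤ B ^ (1 / q) := by
  calc s * X ^ (1 / q) = (s ^ q * X) ^ (1 / q) := by
        rw [mul_rpow (by positivity) hX, one_div, rpow_rpow_inv hs hq.ne']
    _ ≤ B ^ (1 / q) := by gcongr

theorem exists_lt_one_rpow_sub_rpow_le {a b : ℝ} (ha : 0 < a) (hb : 0 < b) :
    ∃ M ∈ Ico (0 : ℝ) 1, ∀ s ∈ Icc (0 : ℝ) 1, s ^ a - s ^ b ≤ M := by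
  have hcont : ContinuousOn (fun s : ℝ => s ^ a - s ^ b) (Icc 0 1) :=
    ((continuous_rpow_const ha.le).sub (continuous_rpow_const hb.le)).continuousOn
  obtain ⟨t, ht, hmax⟩ := isCompact_Icc.exists_isMaxOn (nonempty_Icc.2 zero_le_one) hcont
  refine ⟨t ^ a - t ^ b, ⟨?_, ?_⟩, fun s hs => hmax hs⟩
  · simpa using hmax (right_mem_Icc.2 zero_le_one)
  · rcases ht.1.eq_or_lt with rfl | ht0
    · simp [zero_rpow ha.ne', zero_rpow hb.ne']
    · linarith [rpow_le_one ht.1 ht.2 ha.le, rpow_pos_of_pos ht0 b]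

theorem rpow_mul_rpow_pow {s : ℝ} (hs : 0 < s) (q y : ℝ) (n : ℕ) :
    s ^ q * (s ^ y) ^ n = s ^ (q + y * n) := by
  rw [← rpow_natCast, ← rpow_mul hs.le, ← rpow_add hs]

section NormRpow

variable {E : Type*} [NormedAddCommGroup E] {s β : ℝ}

theorem setOf_lt_norm_rpow_subset_ball (hs : 0 < s) (hβ : β < 0) :
    {x : E | s < ‖x‖ ^ β} ⊆ ball 0 (s ^ β⁻¹) := by
  intro x hx
  rw [mem_ball_zero_iff]
  rcases (norm_nonneg x).eq_or_lt with h | h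
  · rw [← h]
    exact rpow_pos_of_pos hs _
  · exact (lt_rpow_inv_iff_of_neg h hs hβ).2 hx

theorem setOf_lt_norm_rpow_subset_compl_ball (hs : 0 < s) (hβ : 0 < β) :
    {x : E | s < ‖x‖ ^ β} ⊆ (ball 0 (s ^ β⁻¹))ᶜ := by
  intro x hx
  rw [mem_compl_iff, mem_ball_zero_iff, not_lt]
  exact ((rpow_inv_lt_iff_of_pos hs.le (norm_nonneg x) hβ).2 hx).le

end NormRpow

section WeakNorm

variable {d : ℕ} {q : ℝ} {u : EuclideanSpace ℝ (Fin d) → ℝ}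

theorem weakNorm_le_of_rpow_mul_le {B : ℝ} (hq : 0 < q)
    (h : ∀ s, 0 < s → s ^ q * volume.real {x | s < |u x|} ≤ B) : weakNorm q u ≤ B ^ (1 / q) :=
  ciSup_le fun s => mul_rpow_one_div_le_of_rpow_mul_le (le_of_lt s.2) hq measureReal_nonneg
    (h s s.2)

theorem mul_rpow_le_weakNorm_of_rpow_mul_le {B : ℝ} (hq : 0 < q)
    (h : ∀ s, 0 < s → s ^ q * volume.real {x | s < |u x|} ≤ B) {s : ℝ} (hs : 0 < s) :
    s * volume.real {x | s < |u x|} ^ (1 / q) ≤ weakNorm q u :=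
  le_ciSup (f := fun s : Ioi (0 : ℝ) => (s : ℝ) * volume.real {x | (s : ℝ) < |u x|} ^ (1 / q))
    ⟨B ^ (1 / q), forall_mem_range.2 fun t =>
      mul_rpow_one_div_le_of_rpow_mul_le (le_of_lt t.2) hq measureReal_nonneg (h t t.2)⟩ ⟨s, hs⟩

end WeakNorm

section Uc

variable {d : ℕ} {c s : ℝ}

theorem sub_two_div_two_nonneg (hd : 2 ≤ d) : (0 : ℝ) ≤ ((d : ℝ) - 2) / 2 := by
  have : (2 : ℝ) ≤ d := by exact_mod_cast hd
  linarith

theorem sub_two_div_two_pos (hd : 2 < d) : (0 : ℝ) < ((d : ℝ) - 2) / 2 := by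
  have : (2 : ℝ) < d := by exact_mod_cast hd
  linarith

theorem two_mul_div_sub_two_pos (hd : 2 < d) : 0 < 2 * d / ((d : ℝ) - 2) := by
  have : (2 : ℝ) < d := by exact_mod_cast hd
  positivity

theorem abs_uc (x : EuclideanSpace ℝ (Fin d)) : |uc d c x| = uc d c x := by
  unfold uc
  split_ifs <;> exact abs_of_nonneg (rpow_nonneg (norm_nonneg _) _)

theorem uc_le_norm_rpow (hc : 0 ≤ c) {x : EuclideanSpace ℝ (Fin d)} (hx : x ≠ 0) :
    uc d c x ≤ ‖x‖ ^ (-(((d : ℝ) - 2) / 2)) := by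
  have hx0 : 0 < ‖x‖ := norm_pos_iff.2 hx
  unfold uc
  split_ifs with h
  · exact rpow_le_rpow_of_exponent_ge hx0 h (by linarith)
  · exact rpow_le_rpow_of_exponent_le (not_le.1 h).le (by linarith)

theorem one_le_uc (hc : c ≤ ((d : ℝ) - 2) / 2) {x : EuclideanSpace ℝ (Fin d)} (hx0 : x ≠ 0)
    (hx1 : ‖x‖ ≤ 1) : 1 ≤ uc d c x := by
  rw [uc, if_pos hx1]
  exact one_le_rpow_of_pos_of_le_one_of_nonpos (norm_pos_iff.2 hx0) hx1 (by linarith)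

theorem uc_eq_min (hd : 2 ≤ d) (hc : ((d : ℝ) - 2) / 2 < c) (x : EuclideanSpace ℝ (Fin d)) :
    uc d c x = min (‖x‖ ^ (c - ((d : ℝ) - 2) / 2)) (‖x‖ ^ (-c - ((d : ℝ) - 2) / 2)) := by
  have hα := sub_two_div_two_nonneg hd
  unfold uc
  split_ifs with h
  · rcases (norm_nonneg x).eq_or_lt with h0 | h0
    · rw [← h0, zero_rpow (by linarith), zero_rpow (by linarith), min_self]
    · exact (min_eq_left ((rpow_le_one h0.le h (by linarith)).trans
        (one_le_rpow_of_pos_of_le_one_of_nonpos h0 h (by linarith)))).symm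
  · have h1 : 1 ≤ ‖x‖ := (not_le.1 h).le
    exact (min_eq_right ((rpow_le_one_of_one_le_of_nonpos h1 (by linarith)).trans
      (one_le_rpow h1 (by linarith)))).symm

theorem setOf_lt_uc_subset_ball (hd : 2 < d) (hc : 0 ≤ c) (hs : 0 < s) :
    {x : EuclideanSpace ℝ (Fin d) | s < uc d c x} ⊆ ball 0 (s ^ (-(((d : ℝ) - 2) / 2))⁻¹) := by
  have hα := sub_two_div_two_pos hd
  intro x hx
  rcases eq_or_ne x 0 with rfl | hx0
  · exact mem_ball_self (rpow_pos_of_pos hs _)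
  · exact setOf_lt_norm_rpow_subset_ball hs (by linarith) (hx.trans_le (uc_le_norm_rpow hc hx0))

theorem ball_diff_singleton_subset_setOf_lt_uc (hc : c ≤ ((d : ℝ) - 2) / 2) (hs : s < 1) :
    ball (0 : EuclideanSpace ℝ (Fin d)) 1 \ {0} ⊆ {x | s < uc d c x} := fun _ hx =>
  hs.trans_le (one_le_uc hc hx.2 (mem_ball_zero_iff.1 hx.1).le)

theorem setOf_lt_uc_subset_ball_diff_ball (hd : 2 ≤ d) (hc : ((d : ℝ) - 2) / 2 < c)
    (hs : 0 < s) :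
    {x : EuclideanSpace ℝ (Fin d) | s < uc d c x} ⊆
      ball 0 (s ^ (-c - ((d : ℝ) - 2) / 2)⁻¹) \ ball 0 (s ^ (c - ((d : ℝ) - 2) / 2)⁻¹) := by
  have hα := sub_two_div_two_nonneg hd
  intro x hx
  rw [mem_ofPred_eq, uc_eq_min hd hc, lt_min_iff] at hx
  exact ⟨setOf_lt_norm_rpow_subset_ball hs (by linarith) hx.2,
    setOf_lt_norm_rpow_subset_compl_ball hs (by linarith) hx.1⟩

theorem setOf_lt_uc_eq_empty (hd : 2 ≤ d) (hc : ((d : ℝ) - 2) / 2 < c) (hs : 1 ≤ s) :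
    {x : EuclideanSpace ℝ (Fin d) | s < uc d c x} = ∅ := by
  have hα := sub_two_div_two_nonneg hd
  have hR : s ^ (-c - ((d : ℝ) - 2) / 2)⁻¹ ≤ s ^ (c - ((d : ℝ) - 2) / 2)⁻¹ :=
    (rpow_le_one_of_one_le_of_nonpos hs (inv_nonpos.2 (by linarith))).trans
      (one_le_rpow hs (inv_nonneg.2 (by linarith)))
  exact subset_empty_iff.1 ((setOf_lt_uc_subset_ball_diff_ball hd hc
    (zero_lt_one.trans_le hs)).trans (sdiff_eq_empty.2 (ball_subset_ball hR)).subset)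

theorem rpow_mul_volume_real_setOf_lt_uc_le (hd : 2 < d) (hc : 0 ≤ c) (hs : 0 < s) :
    s ^ (2 * d / ((d : ℝ) - 2)) * volume.real {x : EuclideanSpace ℝ (Fin d) | s < uc d c x} ≤
      volume.real (ball (0 : EuclideanSpace ℝ (Fin d)) 1) := by
  have hd' : (2 : ℝ) < d := by exact_mod_cast hd
  have hball := volume.addHaar_real_ball_of_pos (0 : EuclideanSpace ℝ (Fin d))
    (rpow_pos_of_pos hs (-(((d : ℝ) - 2) / 2))⁻¹)
  rw [finrank_euclideanSpace_fin] at hball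
  have hexp : 2 * d / ((d : ℝ) - 2) + (-(((d : ℝ) - 2) / 2))⁻¹ * d = 0 := by
    field_simp
    ring
  calc _ ≤ s ^ (2 * d / ((d : ℝ) - 2)) * volume.real
          (ball (0 : EuclideanSpace ℝ (Fin d)) (s ^ (-(((d : ℝ) - 2) / 2))⁻¹)) := by
        gcongr
        exacts [measure_ball_lt_top.ne, setOf_lt_uc_subset_ball hd hc hs]
    _ = s ^ (2 * d / ((d : ℝ) - 2) + (-(((d : ℝ) - 2) / 2))⁻¹ * d) *
          volume.real (ball (0 : EuclideanSpace ℝ (Fin d)) 1) := by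
        rw [hball, ← mul_assoc, rpow_mul_rpow_pow hs]
    _ = _ := by rw [hexp, rpow_zero, one_mul]

theorem volume_real_ball_le_volume_real_setOf_lt_uc (hd : 2 < d) (hc0 : 0 ≤ c)
    (hc : c ≤ ((d : ℝ) - 2) / 2) (hs0 : 0 < s) (hs1 : s < 1) :
    volume.real (ball (0 : EuclideanSpace ℝ (Fin d)) 1) ≤
      volume.real {x : EuclideanSpace ℝ (Fin d) | s < uc d c x} := by
  have : NeZero d := ⟨by omega⟩
  have h0 : volume ({0} : Set (EuclideanSpace ℝ (Fin d))) = 0 := measure_singleton 0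
  calc _ = volume.real (ball (0 : EuclideanSpace ℝ (Fin d)) 1 \ {0}) :=
        (measureReal_sdiff_null (by simp [measureReal_def, h0]) (by simp [h0])).symm
    _ ≤ _ := measureReal_mono (ball_diff_singleton_subset_setOf_lt_uc hc hs1)
        ((measure_mono (setOf_lt_uc_subset_ball hd hc0 hs0)).trans_lt measure_ball_lt_top).ne

theorem volume_real_setOf_lt_uc_le_of_lt_one (hd : 2 ≤ d) (hc : ((d : ℝ) - 2) / 2 < c)
    (hs0 : 0 < s) (hs1 : s < 1) :
    volume.real {x : EuclideanSpace ℝ (Fin d) | s < uc d c x} ≤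
      ((s ^ (-c - ((d : ℝ) - 2) / 2)⁻¹) ^ d - (s ^ (c - ((d : ℝ) - 2) / 2)⁻¹) ^ d) *
        volume.real (ball (0 : EuclideanSpace ℝ (Fin d)) 1) := by
  have hα := sub_two_div_two_nonneg hd
  have hball (r : ℝ) (hr : 0 < r) :=
    volume.addHaar_real_ball_of_pos (0 : EuclideanSpace ℝ (Fin d)) hr
  simp only [finrank_euclideanSpace_fin] at hball
  have hR : s ^ (c - ((d : ℝ) - 2) / 2)⁻¹ ≤ s ^ (-c - ((d : ℝ) - 2) / 2)⁻¹ :=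
    (rpow_le_one hs0.le hs1.le (inv_nonneg.2 (by linarith))).trans
      (one_le_rpow_of_pos_of_le_one_of_nonpos hs0 hs1.le (inv_nonpos.2 (by linarith)))
  calc _ ≤ volume.real (ball (0 : EuclideanSpace ℝ (Fin d)) (s ^ (-c - ((d : ℝ) - 2) / 2)⁻¹) \
          ball 0 (s ^ (c - ((d : ℝ) - 2) / 2)⁻¹)) :=
        measureReal_mono (setOf_lt_uc_subset_ball_diff_ball hd hc hs0)
          (measure_ne_top_of_subset sdiff_subset measure_ball_lt_top.ne)
    _ = _ := by
        rw [measureReal_sdiff (ball_subset_ball hR) measurableSet_ball,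
          hball _ (rpow_pos_of_pos hs0 _), hball _ (rpow_pos_of_pos hs0 _), sub_mul]

end Uc

section WeakNormUc

variable {d : ℕ} {c : ℝ}

theorem rpow_mul_volume_real_setOf_lt_abs_uc_le (hd : 2 < d) (hc : 0 ≤ c) (s : ℝ) (hs : 0 < s) :
    s ^ (2 * d / ((d : ℝ) - 2)) *
        volume.real {x : EuclideanSpace ℝ (Fin d) | s < |uc d c x|} ≤
      volume.real (ball (0 : EuclideanSpace ℝ (Fin d)) 1) := by
  simpa only [abs_uc] using rpow_mul_volume_real_setOf_lt_uc_le hd hc hs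

theorem weakNorm_uc_le (hd : 2 < d) (hc : 0 ≤ c) :
    weakNorm (2 * d / ((d : ℝ) - 2)) (uc d c) ≤
      volume.real (ball (0 : EuclideanSpace ℝ (Fin d)) 1) ^ (1 / (2 * d / ((d : ℝ) - 2))) :=
  weakNorm_le_of_rpow_mul_le (two_mul_div_sub_two_pos hd)
    (rpow_mul_volume_real_setOf_lt_abs_uc_le hd hc)

theorem volume_real_ball_rpow_le_weakNorm_uc (hd : 2 < d) (hc0 : 0 ≤ c)
    (hc : c ≤ ((d : ℝ) - 2) / 2) :
    volume.real (ball (0 : EuclideanSpace ℝ (Fin d)) 1) ^ (1 / (2 * d / ((d : ℝ) - 2))) ≤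
      weakNorm (2 * d / ((d : ℝ) - 2)) (uc d c) := by
  set L := volume.real (ball (0 : EuclideanSpace ℝ (Fin d)) 1) ^ (1 / (2 * d / ((d : ℝ) - 2)))
  have hlim : Tendsto (fun s : ℝ => s * L) (𝓝[<] 1) (𝓝 L) := by
    simpa only [one_mul] using ((continuous_mul_const L).tendsto 1).mono_left nhdsWithin_le_nhds
  refine le_of_tendsto hlim ?_
  filter_upwards [Ioo_mem_nhdsLT zero_lt_one] with s ⟨hs0, hs1⟩
  calc s * L ≤ s * volume.real {x | s < |uc d c x|} ^ (1 / (2 * d / ((d : ℝ) - 2))) := by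
        simp only [L, abs_uc]
        have := two_mul_div_sub_two_pos hd
        gcongr ?_ * ?_ ^ _
        exact volume_real_ball_le_volume_real_setOf_lt_uc hd hc0 hc hs0 hs1
    _ ≤ _ := mul_rpow_le_weakNorm_of_rpow_mul_le (two_mul_div_sub_two_pos hd)
        (rpow_mul_volume_real_setOf_lt_abs_uc_le hd hc0) hs0

theorem weakNorm_uc_lt (hd : 2 < d) (hc : ((d : ℝ) - 2) / 2 < c) :
    weakNorm (2 * d / ((d : ℝ) - 2)) (uc d c) <
      volume.real (ball (0 : EuclideanSpace ℝ (Fin d)) 1) ^ (1 / (2 * d / ((d : ℝ) - 2))) := by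
  set α := ((d : ℝ) - 2) / 2 with hα_def
  set q := 2 * d / ((d : ℝ) - 2) with hq_def
  set V := volume.real (ball (0 : EuclideanSpace ℝ (Fin d)) 1)
  have hα : 0 < α := sub_two_div_two_pos hd
  have hqα : q = d / α := by
    rw [hq_def, hα_def]
    field_simp
  have hq : 0 < q := two_mul_div_sub_two_pos hd
  have ha : 0 < q + (-c - α)⁻¹ * d := by
    have : (-c - α)⁻¹ * d = -(d / (c + α)) := by
      rw [show -c - α = -(c + α) by ring, inv_neg, neg_mul, inv_mul_eq_div]
    rw [hqα, this, ← sub_eq_add_neg, sub_pos]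
    exact div_lt_div_of_pos_left (by positivity) hα (by linarith)
  have hb : 0 < q + (c - α)⁻¹ * d := by
    have : 0 < c - α := by linarith
    positivity
  obtain ⟨M, ⟨hM0, hM1⟩, hM⟩ := exists_lt_one_rpow_sub_rpow_le ha hb
  have hV : 0 < V :=
    ENNReal.toReal_pos (measure_ball_pos volume _ one_pos).ne' measure_ball_lt_top.ne
  have hbound (s : ℝ) (hs : 0 < s) : s ^ q * volume.real {x | s < |uc d c x|} ≤ M * V := by
    simp only [abs_uc]
    rcases lt_or_ge s 1 with hs1 | hs1
    · calc _ ≤ s ^ q * (((s ^ (-c - α)⁻¹) ^ d - (s ^ (c - α)⁻¹) ^ d) * V) := by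
            gcongr
            exact volume_real_setOf_lt_uc_le_of_lt_one hd.le hc hs hs1
        _ = (s ^ (q + (-c - α)⁻¹ * d) - s ^ (q + (c - α)⁻¹ * d)) * V := by
            rw [← mul_assoc, mul_sub, rpow_mul_rpow_pow hs, rpow_mul_rpow_pow hs]
        _ ≤ M * V := by
            gcongr
            exact hM s ⟨hs.le, hs1.le⟩
    · rw [setOf_lt_uc_eq_empty hd.le hc hs1, measureReal_empty, mul_zero]
      positivity
  calc weakNorm q (uc d c) ≤ (M * V) ^ (1 / q) := weakNorm_le_of_rpow_mul_le hq hbound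
    _ = M ^ (1 / q) * V ^ (1 / q) := mul_rpow hM0 hV.le
    _ < V ^ (1 / q) := mul_lt_of_lt_one_left (by positivity) (rpow_lt_one hM0 hM1 (by positivity))

end WeakNormUc

/-- For `d ≥ 3`, `2* = 2d/(d−2)` (so `1/2* = (d−2)/(2d)`) and `c > 0`:
(a) if `0 < c ≤ (d−2)/2` then `‖u_c‖_{L^{2*,∞}} = |B(0,1)|^{1/2*}`;
(b) if `c > (d−2)/2` then `‖u_c‖_{L^{2*,∞}} < |B(0,1)|^{1/2*}`. -/
theorem stmt15 (d : ℕ) (hd : 3 ≤ d) (c : ℝ) (hc : 0 < c) :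
    (c ≤ ((d : ℝ) - 2) / 2 →
      weakNorm (2 * d / ((d : ℝ) - 2)) (uc d c) =
        (volume (Metric.ball (0 : EuclideanSpace ℝ (Fin d)) 1)).toReal ^
          (((d : ℝ) - 2) / (2 * d))) ∧
    (((d : ℝ) - 2) / 2 < c →
      weakNorm (2 * d / ((d : ℝ) - 2)) (uc d c) <
        (volume (Metric.ball (0 : EuclideanSpace ℝ (Fin d)) 1)).toReal ^
          (((d : ℝ) - 2) / (2 * d))) := by
  have hd' : 2 < d := hd
  rw [show ((d : ℝ) - 2) / (2 * d) = 1 / (2 * d / ((d : ℝ) - 2)) from (one_div_div _ _).symm]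
  exact ⟨fun hcα => (weakNorm_uc_le hd' hc.le).antisymm
      (volume_real_ball_rpow_le_weakNorm_uc hd' hc.le hcα),
    weakNorm_uc_lt hd'⟩
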